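/- (Convergence of the RB projected gradient method to a stationary point.) Let X ∈ RB^{M×N}, f(W,H) = (1/2)‖X - W·H‖_F^2, σ ∈ (0,1), μ ∈ (0,1). Suppose sequences W_t ∈ RB_+^{M×l}, H_t ∈ RB_{+j}^{l×N} are generated by: W_{t+1} = P_+(W_t - α_t·∇_W f(W_t,H_t)) where α_t = μ^{d_t} and d_t is the smallest nonnegative integer d for which f(P_+(W_t - μ^d·∇_W f(W_t,H_t)), H_t) - f(W_t,H_t) ≤ σ·Re⟨∇_W f(W_t,H_t), P_+(W_t - μ^d·∇_W f(W_t,H_t)) - W_t⟩; and H_{t+1} = P_{+j}(H_t - β_t·∇_H f(W_{t+1},H_t)) where β_t = μ^{s_t} and s_t is the smallest nonnegative integer s for which the analogous Armijo condition for H holds. If W_t converges to W* and H_t converges to H* (componentwise in all four real component matrices), then (W*,H*) is a stationary point of the problem of minimizing f over RB_+^{M×l} × RB_{+j}^{l×N}; that is, Re⟨∇_W f(W*,H*), M - W*⟩ ≥ 0 for all M ∈ RB_+^{M×l} and Re⟨∇_H f(W*,H*), N - H*⟩ ≥ 0 for all N ∈ RB_{+j}^{l×N}. -/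

import Mathlib

open Matrix

noncomputable section

/-- A reduced biquaternion `q = q0 + q1*i + q2*j + q3*k` with real components,
where `i^2 = k^2 = -1`, `j^2 = 1`, `ij = ji = k`, `jk = kj = i`, `ki = ik = -j`. -/
@[ext]
structure RB where
  r : ℝ
  i : ℝ
  j : ℝ
  k : ℝ

namespace RB

instance : Zero RB := ⟨⟨0, 0, 0, 0⟩⟩
instance : One RB := ⟨⟨1, 0, 0, 0⟩⟩
instance : Add RB := ⟨fun p q => ⟨p.r + q.r, p.i + q.i, p.j + q.j, p.k + q.k⟩⟩
instance : Neg RB := ⟨fun p => ⟨-p.r, -p.i, -p.j, -p.k⟩⟩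
instance : Mul RB := ⟨fun p q =>
  ⟨p.r * q.r - p.i * q.i + p.j * q.j - p.k * q.k,
   p.r * q.i + p.i * q.r + p.j * q.k + p.k * q.j,
   p.r * q.j + p.j * q.r - p.i * q.k - p.k * q.i,
   p.r * q.k + p.k * q.r + p.i * q.j + p.j * q.i⟩⟩
instance : SMul ℝ RB := ⟨fun a q => ⟨a * q.r, a * q.i, a * q.j, a * q.k⟩⟩

@[simp] theorem zero_r : (0 : RB).r = 0 := rfl
@[simp] theorem zero_i : (0 : RB).i = 0 := rfl
@[simp] theorem zero_j : (0 : RB).j = 0 := rfl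
@[simp] theorem zero_k : (0 : RB).k = 0 := rfl
@[simp] theorem one_r : (1 : RB).r = 1 := rfl
@[simp] theorem one_i : (1 : RB).i = 0 := rfl
@[simp] theorem one_j : (1 : RB).j = 0 := rfl
@[simp] theorem one_k : (1 : RB).k = 0 := rfl
@[simp] theorem add_r (p q : RB) : (p + q).r = p.r + q.r := rfl
@[simp] theorem add_i (p q : RB) : (p + q).i = p.i + q.i := rfl
@[simp] theorem add_j (p q : RB) : (p + q).j = p.j + q.j := rfl
@[simp] theorem add_k (p q : RB) : (p + q).k = p.k + q.k := rfl
@[simp] theorem neg_r (p : RB) : (-p).r = -p.r := rfl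
@[simp] theorem neg_i (p : RB) : (-p).i = -p.i := rfl
@[simp] theorem neg_j (p : RB) : (-p).j = -p.j := rfl
@[simp] theorem neg_k (p : RB) : (-p).k = -p.k := rfl
@[simp] theorem mul_r (p q : RB) :
    (p * q).r = p.r * q.r - p.i * q.i + p.j * q.j - p.k * q.k := rfl
@[simp] theorem mul_i (p q : RB) :
    (p * q).i = p.r * q.i + p.i * q.r + p.j * q.k + p.k * q.j := rfl
@[simp] theorem mul_j (p q : RB) :
    (p * q).j = p.r * q.j + p.j * q.r - p.i * q.k - p.k * q.i := rfl
@[simp] theorem mul_k (p q : RB) :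
    (p * q).k = p.r * q.k + p.k * q.r + p.i * q.j + p.j * q.i := rfl
@[simp] theorem smul_r (a : ℝ) (q : RB) : (a • q).r = a * q.r := rfl
@[simp] theorem smul_i (a : ℝ) (q : RB) : (a • q).i = a * q.i := rfl
@[simp] theorem smul_j (a : ℝ) (q : RB) : (a • q).j = a * q.j := rfl
@[simp] theorem smul_k (a : ℝ) (q : RB) : (a • q).k = a * q.k := rfl

instance : CommRing RB where
  add := (· + ·)
  zero := 0
  neg := Neg.neg
  mul := (· * ·)
  one := 1
  add_assoc p q s := by ext <;> simp <;> ring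
  zero_add p := by ext <;> simp
  add_zero p := by ext <;> simp
  add_comm p q := by ext <;> simp <;> ring
  neg_add_cancel p := by ext <;> simp
  mul_assoc p q s := by ext <;> simp <;> ring
  one_mul p := by ext <;> simp
  mul_one p := by ext <;> simp
  left_distrib p q s := by ext <;> simp <;> ring
  right_distrib p q s := by ext <;> simp <;> ring
  zero_mul p := by ext <;> simp
  mul_zero p := by ext <;> simp
  mul_comm p q := by ext <;> simp <;> ring
  nsmul := nsmulRec
  zsmul := zsmulRec

/-- The imaginary unit `i` of the reduced biquaternions. -/
def uI : RB := ⟨0, 1, 0, 0⟩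
/-- The imaginary unit `j` of the reduced biquaternions. -/
def uJ : RB := ⟨0, 0, 1, 0⟩
/-- The imaginary unit `k` of the reduced biquaternions. -/
def uK : RB := ⟨0, 0, 0, 1⟩

/-- Embedding of the reals into the reduced biquaternions. -/
def ofReal (a : ℝ) : RB := ⟨a, 0, 0, 0⟩

/-- Embedding of the complex numbers into the reduced biquaternions,
`x + y*î ↦ x + y*i`. -/
def ofComplex (z : ℂ) : RB := ⟨z.re, z.im, 0, 0⟩

/-- Conjugation of a reduced biquaternion: `q* = q0 - q1*i + q2*j - q3*k`. -/
def conj (q : RB) : RB := ⟨q.r, -q.i, q.j, -q.k⟩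

instance : Star RB := ⟨conj⟩

/-- The idempotent `e1 = (1 + j)/2`. -/
def e1 : RB := ⟨1/2, 0, 1/2, 0⟩

/-- The idempotent `e2 = (1 - j)/2`. -/
def e2 : RB := ⟨1/2, 0, -(1/2), 0⟩

end RB

/-- Real-part component matrix of an RB matrix. -/
def Mr {m n : Type*} (Q : Matrix m n RB) : Matrix m n ℝ := Matrix.of fun a b => (Q a b).r
/-- `i`-part component matrix of an RB matrix. -/
def Mi {m n : Type*} (Q : Matrix m n RB) : Matrix m n ℝ := Matrix.of fun a b => (Q a b).i
/-- `j`-part component matrix of an RB matrix. -/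
def Mj {m n : Type*} (Q : Matrix m n RB) : Matrix m n ℝ := Matrix.of fun a b => (Q a b).j
/-- `k`-part component matrix of an RB matrix. -/
def Mk {m n : Type*} (Q : Matrix m n RB) : Matrix m n ℝ := Matrix.of fun a b => (Q a b).k

/-- The RB matrix `Q0 + Q1*i + Q2*j + Q3*k` built from four real component matrices. -/
def mk4 {m n : Type*} (A0 A1 A2 A3 : m → n → ℝ) : Matrix m n RB :=
  Matrix.of fun a b => ⟨A0 a b, A1 a b, A2 a b, A3 a b⟩

/-- Inner product of two RB matrices: `⟨Q,P⟩ = Σ_{m,n} (q_{mn})* ⬝ p_{mn}`. -/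
def minner {m n : Type*} [Fintype m] [Fintype n] (Q P : Matrix m n RB) : RB :=
  ∑ a, ∑ b, RB.conj (Q a b) * P a b

/-- The Frobenius norm of an RB matrix, `‖Q‖_F = sqrt(Re⟨Q,Q⟩)`. -/
def fnorm {m n : Type*} [Fintype m] [Fintype n] (Q : Matrix m n RB) : ℝ :=
  Real.sqrt (minner Q Q).r

/-- Real Frobenius inner product of real matrices. -/
def finner {m n : Type*} [Fintype m] [Fintype n] (A B : Matrix m n ℝ) : ℝ :=
  ∑ a, ∑ b, A a b * B a b

/-- Real Frobenius norm of a real matrix. -/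
def rnorm {m n : Type*} [Fintype m] [Fintype n] (A : Matrix m n ℝ) : ℝ :=
  Real.sqrt (finner A A)

/-- `Q ∈ RB_+^{M×N}`: all four real component matrices are entrywise nonnegative. -/
def Pos {m n : Type*} (Q : Matrix m n RB) : Prop :=
  ∀ a b, 0 ≤ (Q a b).r ∧ 0 ≤ (Q a b).i ∧ 0 ≤ (Q a b).j ∧ 0 ≤ (Q a b).k

/-- `Q ∈ RB_{+j}^{M×N}`: `Q = Q0 + Q2*j` with `Q0, Q2` entrywise nonnegative. -/
def PosJ {m n : Type*} (Q : Matrix m n RB) : Prop :=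
  ∀ a b, 0 ≤ (Q a b).r ∧ (Q a b).i = 0 ∧ 0 ≤ (Q a b).j ∧ (Q a b).k = 0

/-- The projection `P_+` onto `RB_+^{M×N}`: entrywise positive part in all four components. -/
def proj {m n : Type*} (Q : Matrix m n RB) : Matrix m n RB :=
  Matrix.of fun a b => ⟨max (Q a b).r 0, max (Q a b).i 0, max (Q a b).j 0, max (Q a b).k 0⟩

/-- The projection `P_{+j}` onto `RB_{+j}^{M×N}`: `Q ↦ max(Q0,0) + max(Q2,0)*j`. -/
def projJ {m n : Type*} (Q : Matrix m n RB) : Matrix m n RB :=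
  Matrix.of fun a b => ⟨max (Q a b).r 0, 0, max (Q a b).j 0, 0⟩

/-- The objective `f(W,H) = (1/2)*‖X - W*H‖_F^2`. -/
def objf {M N l : ℕ} (X : Matrix (Fin M) (Fin N) RB) (W : Matrix (Fin M) (Fin l) RB)
    (H : Matrix (Fin l) (Fin N) RB) : ℝ :=
  (1 / 2) * fnorm (X - W * H) ^ 2

/-- The RB gradient `∇_W f(W,H) = (W*H - X)*H^H`. -/
def gradW {M N l : ℕ} (X : Matrix (Fin M) (Fin N) RB) (W : Matrix (Fin M) (Fin l) RB)
    (H : Matrix (Fin l) (Fin N) RB) : Matrix (Fin M) (Fin l) RB :=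
  (W * H - X) * Hᴴ

/-- The RB gradient `∇_H f(W,H) = W^H*(W*H - X)`. -/
def gradH {M N l : ℕ} (X : Matrix (Fin M) (Fin N) RB) (W : Matrix (Fin M) (Fin l) RB)
    (H : Matrix (Fin l) (Fin N) RB) : Matrix (Fin l) (Fin N) RB :=
  Wᴴ * (W * H - X)

/-- Entrywise embedding of a complex matrix into RB matrices. -/
def cmat {m n : Type*} (A : Matrix m n ℂ) : Matrix m n RB :=
  Matrix.of fun a b => RB.ofComplex (A a b)

/-- The `e1–e2` form `N1*e1 + N2*e2` of an RB matrix, for complex matrices `N1, N2`. -/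
def eform {m n : Type*} (N1 N2 : Matrix m n ℂ) : Matrix m n RB :=
  Matrix.of fun a b => RB.ofComplex (N1 a b) * RB.e1 + RB.ofComplex (N2 a b) * RB.e2

/-- The Armijo sufficient-decrease condition for the `W`-update with step size `η`. -/
def armijoW {M N l : ℕ} (X : Matrix (Fin M) (Fin N) RB) (W : Matrix (Fin M) (Fin l) RB)
    (H : Matrix (Fin l) (Fin N) RB) (σ η : ℝ) : Prop :=
  objf X (proj (W - η • gradW X W H)) H - objf X W H ≤
    σ * (minner (gradW X W H) (proj (W - η • gradW X W H) - W)).r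

/-- The Armijo sufficient-decrease condition for the `H`-update with step size `η`. -/
def armijoH {M N l : ℕ} (X : Matrix (Fin M) (Fin N) RB) (W : Matrix (Fin M) (Fin l) RB)
    (H : Matrix (Fin l) (Fin N) RB) (σ η : ℝ) : Prop :=
  objf X W (projJ (H - η • gradH X W H)) - objf X W H ≤
    σ * (minner (gradH X W H) (projJ (H - η • gradH X W H) - H)).r


/-!
Every iterate is feasible and, along the convergent (hence bounded) iterates, the gradient of
`f` in each block is Lipschitz with a uniform constant, so the Armijo condition holds for every
step in some interval `(0, η₀]` independent of `t`. Minimality of `d_t` and `s_t` then keeps the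
step sizes above `min 1 (μ η₀) > 0`. The obtuse-angle inequality of the projection gives
`Re ⟨W_t - W_{t+1}, M - W_{t+1}⟩ ≤ α_t Re ⟨∇_W f(W_t, H_t), M - W_{t+1}⟩`; the left side tends
to `0` and `α_t` stays away from `0`, so the limit `Re ⟨∇_W f(W*, H*), M - W*⟩` of the inner
products on the right is nonnegative. The same argument applies to `H`.
-/

open Finset Filter Topology

namespace RB

theorem sub_r (p q : RB) : (p - q).r = p.r - q.r := rfl
theorem sub_i (p q : RB) : (p - q).i = p.i - q.i := rfl
theorem sub_j (p q : RB) : (p - q).j = p.j - q.j := rfl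
theorem sub_k (p q : RB) : (p - q).k = p.k - q.k := rfl

theorem sum_r {α : Type*} (s : Finset α) (f : α → RB) :
    (∑ x ∈ s, f x).r = ∑ x ∈ s, (f x).r :=
  map_sum (AddMonoidHom.mk' RB.r fun _ _ => rfl) f s
theorem sum_i {α : Type*} (s : Finset α) (f : α → RB) :
    (∑ x ∈ s, f x).i = ∑ x ∈ s, (f x).i :=
  map_sum (AddMonoidHom.mk' RB.i fun _ _ => rfl) f s
theorem sum_j {α : Type*} (s : Finset α) (f : α → RB) :
    (∑ x ∈ s, f x).j = ∑ x ∈ s, (f x).j :=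
  map_sum (AddMonoidHom.mk' RB.j fun _ _ => rfl) f s
theorem sum_k {α : Type*} (s : Finset α) (f : α → RB) :
    (∑ x ∈ s, f x).k = ∑ x ∈ s, (f x).k :=
  map_sum (AddMonoidHom.mk' RB.k fun _ _ => rfl) f s

def dot (p q : RB) : ℝ := p.r * q.r + p.i * q.i + p.j * q.j + p.k * q.k

theorem conj_mul_r (p q : RB) : (conj p * q).r = dot p q := by
  simp only [conj, mul_r, dot]; ring

theorem dot_comm (p q : RB) : dot p q = dot q p := by
  simp only [dot]; ring

theorem dot_self_nonneg (p : RB) : 0 ≤ dot p p := by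
  simp only [dot, ← sq]; positivity

theorem dot_mul_self_le (p q : RB) : dot (p * q) (p * q) ≤ 4 * (dot p p * dot q q) := by
  have h4 (a b c d : ℝ) : (a + b + c + d) ^ 2 ≤ 4 * (a ^ 2 + b ^ 2 + c ^ 2 + d ^ 2) := by
    nlinarith [sq_nonneg (a - b), sq_nonneg (a - c), sq_nonneg (a - d), sq_nonneg (b - c),
      sq_nonneg (b - d), sq_nonneg (c - d)]
  have hr := h4 (p.r * q.r) (-(p.i * q.i)) (p.j * q.j) (-(p.k * q.k))
  have hi := h4 (p.r * q.i) (p.i * q.r) (p.j * q.k) (p.k * q.j)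
  have hj := h4 (p.r * q.j) (p.j * q.r) (-(p.i * q.k)) (-(p.k * q.i))
  have hk := h4 (p.r * q.k) (p.k * q.r) (p.i * q.j) (p.j * q.i)
  simp only [dot, mul_r, mul_i, mul_j, mul_k]
  nlinarith

theorem dot_sum_self_le {α : Type*} [Fintype α] (x : α → RB) :
    dot (∑ c, x c) (∑ c, x c) ≤ Fintype.card α * ∑ c, dot (x c) (x c) := by
  have hr := sq_sum_le_card_mul_sum_sq (s := univ) (f := fun c => (x c).r)
  have hi := sq_sum_le_card_mul_sum_sq (s := univ) (f := fun c => (x c).i)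
  have hj := sq_sum_le_card_mul_sum_sq (s := univ) (f := fun c => (x c).j)
  have hk := sq_sum_le_card_mul_sum_sq (s := univ) (f := fun c => (x c).k)
  simp only [card_univ] at hr hi hj hk
  simp only [dot, sum_r, sum_i, sum_j, sum_k, ← sq, sum_add_distrib, mul_add]
  linarith

instance : TopologicalSpace RB :=
  TopologicalSpace.induced (fun q => (q.r, q.i, q.j, q.k)) inferInstance

theorem continuous_components : Continuous fun q : RB => (q.r, q.i, q.j, q.k) :=
  continuous_induced_dom

@[fun_prop] theorem continuous_r : Continuous RB.r :=
  continuous_fst.comp continuous_components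
@[fun_prop] theorem continuous_i : Continuous RB.i :=
  continuous_fst.comp (continuous_snd.comp continuous_components)
@[fun_prop] theorem continuous_j : Continuous RB.j :=
  continuous_fst.comp (continuous_snd.comp (continuous_snd.comp continuous_components))
@[fun_prop] theorem continuous_k : Continuous RB.k :=
  continuous_snd.comp (continuous_snd.comp (continuous_snd.comp continuous_components))

theorem continuous_of_components {α : Type*} [TopologicalSpace α] {f : α → RB}
    (hr : Continuous fun x => (f x).r) (hi : Continuous fun x => (f x).i)
    (hj : Continuous fun x => (f x).j) (hk : Continuous fun x => (f x).k) : Continuous f :=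
  continuous_induced_rng.2 (hr.prodMk (hi.prodMk (hj.prodMk hk)))

theorem tendsto_nhds_iff {α : Type*} {l : Filter α} {f : α → RB} {p : RB} :
    Tendsto f l (𝓝 p) ↔ Tendsto (fun x => (f x).r) l (𝓝 p.r) ∧
      Tendsto (fun x => (f x).i) l (𝓝 p.i) ∧ Tendsto (fun x => (f x).j) l (𝓝 p.j) ∧
      Tendsto (fun x => (f x).k) l (𝓝 p.k) := by
  rw [nhds_induced, tendsto_comap_iff, Prod.tendsto_iff, Prod.tendsto_iff, Prod.tendsto_iff]
  rfl

instance : IsTopologicalRing RB where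
  continuous_add := continuous_of_components (by simp only [add_r]; fun_prop)
    (by simp only [add_i]; fun_prop) (by simp only [add_j]; fun_prop)
    (by simp only [add_k]; fun_prop)
  continuous_mul := continuous_of_components (by simp only [mul_r]; fun_prop)
    (by simp only [mul_i]; fun_prop) (by simp only [mul_j]; fun_prop)
    (by simp only [mul_k]; fun_prop)
  continuous_neg := continuous_of_components (by simp only [neg_r]; fun_prop)
    (by simp only [neg_i]; fun_prop) (by simp only [neg_j]; fun_prop)
    (by simp only [neg_k]; fun_prop)

instance : ContinuousStar RB where
  continuous_star := continuous_of_components (by simp only [star, conj]; fun_prop)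
    (by simp only [star, conj]; fun_prop) (by simp only [star, conj]; fun_prop)
    (by simp only [star, conj]; fun_prop)

end RB

theorem Matrix.tendsto_of_forall_components {m n : Type*} {W : ℕ → Matrix m n RB}
    {W₀ : Matrix m n RB}
    (h : ∀ a b,
      Tendsto (fun t => (W t a b).r) atTop (𝓝 (W₀ a b).r) ∧
      Tendsto (fun t => (W t a b).i) atTop (𝓝 (W₀ a b).i) ∧
      Tendsto (fun t => (W t a b).j) atTop (𝓝 (W₀ a b).j) ∧
      Tendsto (fun t => (W t a b).k) atTop (𝓝 (W₀ a b).k)) :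
    Tendsto W atTop (𝓝 W₀) :=
  tendsto_pi_nhds.2 fun a => tendsto_pi_nhds.2 fun b => RB.tendsto_nhds_iff.2 (h a b)

theorem sub_max_zero_mul_le {x z : ℝ} (hz : 0 ≤ z) : (x - max x 0) * (z - max x 0) ≤ 0 := by
  rcases le_total 0 x with hx | hx
  · simp [max_eq_left hx]
  · simpa [max_eq_right hx] using mul_nonpos_of_nonpos_of_nonneg hx hz

theorem nonneg_of_tendsto_of_le_mul {ι : Type*} {l : Filter ι} [l.NeBot] {c y α : ι → ℝ}
    {y₀ a : ℝ} (hc : Tendsto c l (𝓝 0)) (hy : Tendsto y l (𝓝 y₀)) (ha : 0 < a)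
    (hα : ∀ i, a ≤ α i) (h : ∀ i, c i ≤ α i * y i) : 0 ≤ y₀ := by
  have hmin (i : ι) : min (c i) 0 ≤ a * min (y i) 0 := by
    rcases le_total 0 (y i) with hy | hy
    · simp [min_eq_right hy]
    · rw [min_eq_left hy]
      nlinarith [h i, hα i, min_le_left (c i) 0]
  have hlim := le_of_tendsto_of_tendsto' (hc.min tendsto_const_nhds)
    ((hy.min tendsto_const_nhds).const_mul a) hmin
  rw [min_self] at hlim
  exact (le_min_iff.1 (nonneg_of_mul_nonneg_right hlim ha)).1

theorem exists_pos_le_pow_of_forall_lt_not {ι : Type*} {μ : ℝ} (hμ : 0 < μ)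
    {Q : ι → ℝ → Prop} (hQ : ∀ᶠ η in 𝓝[>] 0, ∀ i, Q i η) {d : ι → ℕ}
    (hd : ∀ i, ∀ d' < d i, ¬ Q i (μ ^ d')) : ∃ a > 0, ∀ i, a ≤ μ ^ d i := by
  obtain ⟨η₀, hη₀, hQη₀⟩ := (mem_nhdsGT_iff_exists_Ioc_subset).1 hQ
  refine ⟨min 1 (μ * η₀), lt_min one_pos (mul_pos hμ hη₀), fun i => ?_⟩
  rcases hdi : d i with _ | e
  · exact (min_le_left _ _).trans (pow_zero μ).ge
  · have hlt : η₀ < μ ^ e := by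
      by_contra! hle
      exact hd i e (by omega) (hQη₀ ⟨pow_pos hμ e, hle⟩ i)
    rw [pow_succ']
    exact (min_le_right _ _).trans (by gcongr)

section RBMatrix

variable {m n k : Type*} [Fintype m] [Fintype n] [Fintype k]

def reInner (A B : Matrix m n RB) : ℝ := ∑ a, ∑ b, RB.dot (A a b) (B a b)

theorem minner_r (A B : Matrix m n RB) : (minner A B).r = reInner A B := by
  simp only [minner, reInner, RB.sum_r, RB.conj_mul_r]

theorem reInner_comm (A B : Matrix m n RB) : reInner A B = reInner B A := by
  simp only [reInner, RB.dot_comm (A _ _)]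

theorem reInner_self_nonneg (A : Matrix m n RB) : 0 ≤ reInner A A :=
  sum_nonneg fun _ _ => sum_nonneg fun _ _ => RB.dot_self_nonneg _

theorem reInner_add_left (A B C : Matrix m n RB) :
    reInner (A + B) C = reInner A C + reInner B C := by
  simp only [reInner, ← sum_add_distrib]
  refine sum_congr rfl fun _ _ => sum_congr rfl fun _ _ => ?_
  simp only [RB.dot, Matrix.add_apply, RB.add_r, RB.add_i, RB.add_j, RB.add_k]; ring

theorem reInner_sub_left (A B C : Matrix m n RB) :
    reInner (A - B) C = reInner A C - reInner B C := by
  simp only [reInner, ← sum_sub_distrib]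
  refine sum_congr rfl fun _ _ => sum_congr rfl fun _ _ => ?_
  simp only [RB.dot, Matrix.sub_apply, RB.sub_r, RB.sub_i, RB.sub_j, RB.sub_k]; ring

theorem reInner_neg_left (A B : Matrix m n RB) : reInner (-A) B = -reInner A B := by
  simp only [reInner, ← sum_neg_distrib]
  refine sum_congr rfl fun _ _ => sum_congr rfl fun _ _ => ?_
  simp only [RB.dot, Matrix.neg_apply, RB.neg_r, RB.neg_i, RB.neg_j, RB.neg_k]; ring

theorem reInner_neg_right (A B : Matrix m n RB) : reInner A (-B) = -reInner A B := by
  rw [reInner_comm, reInner_neg_left, reInner_comm]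

theorem reInner_zero_left (B : Matrix m n RB) : reInner 0 B = 0 := by
  simp [reInner, RB.dot]

theorem reInner_smul_left (c : ℝ) (A B : Matrix m n RB) :
    reInner (c • A) B = c * reInner A B := by
  simp only [reInner, mul_sum]
  refine sum_congr rfl fun _ _ => sum_congr rfl fun _ _ => ?_
  simp only [RB.dot, Matrix.smul_apply, RB.smul_r, RB.smul_i, RB.smul_j, RB.smul_k]; ring

theorem reInner_add_right (A B C : Matrix m n RB) :
    reInner A (B + C) = reInner A B + reInner A C := by
  rw [reInner_comm, reInner_add_left, reInner_comm B, reInner_comm C]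

theorem reInner_add_add_self (A B : Matrix m n RB) :
    reInner (A + B) (A + B) = reInner A A + 2 * reInner A B + reInner B B := by
  rw [reInner_add_left, reInner_add_right, reInner_add_right, reInner_comm B A]; ring

theorem reInner_mul_right (A : Matrix m n RB) (B : Matrix m k RB) (C : Matrix k n RB) :
    reInner A (B * C) = reInner (A * Cᴴ) B := by
  simp only [reInner, Matrix.mul_apply, Matrix.conjTranspose_apply, RB.dot, RB.sum_r, RB.sum_i,
    RB.sum_j, RB.sum_k, sum_mul, mul_sum, ← sum_add_distrib]
  refine sum_congr rfl fun a _ => ?_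
  rw [sum_comm]
  refine sum_congr rfl fun c _ => sum_congr rfl fun b _ => ?_
  simp only [RB.mul_r, RB.mul_i, RB.mul_j, RB.mul_k, star, RB.conj]
  ring

theorem reInner_mul_left (A : Matrix m n RB) (B : Matrix m k RB) (C : Matrix k n RB) :
    reInner A (B * C) = reInner (Bᴴ * A) C := by
  simp only [reInner, Matrix.mul_apply, Matrix.conjTranspose_apply, RB.dot, RB.sum_r, RB.sum_i,
    RB.sum_j, RB.sum_k, sum_mul, mul_sum, ← sum_add_distrib]
  simp only [sum_comm (s := (univ : Finset n)) (t := (univ : Finset k)),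
    sum_comm (s := (univ : Finset m)) (t := (univ : Finset k)),
    sum_comm (s := (univ : Finset n)) (t := (univ : Finset m))]
  refine sum_congr rfl fun c _ => sum_congr rfl fun a _ => sum_congr rfl fun b _ => ?_
  simp only [RB.mul_r, RB.mul_i, RB.mul_j, RB.mul_k, star, RB.conj]
  ring

theorem reInner_mul_self_le (A : Matrix m k RB) (B : Matrix k n RB) :
    reInner (A * B) (A * B) ≤ 4 * Fintype.card k * (reInner A A * reInner B B) := by
  have hrow (c : k) : ∑ b, RB.dot (B c b) (B c b) ≤ reInner B B :=
    single_le_sum (f := fun c => ∑ b, RB.dot (B c b) (B c b))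
      (fun _ _ => sum_nonneg fun _ _ => RB.dot_self_nonneg _) (mem_univ c)
  calc reInner (A * B) (A * B)
      ≤ ∑ a, ∑ b, Fintype.card k * ∑ c, RB.dot (A a c * B c b) (A a c * B c b) :=
        sum_le_sum fun a _ => sum_le_sum fun b _ => RB.dot_sum_self_le _
    _ ≤ ∑ a, ∑ b, Fintype.card k *
          ∑ c, 4 * (RB.dot (A a c) (A a c) * RB.dot (B c b) (B c b)) := by
        gcongr with a _ b _ c _; exact RB.dot_mul_self_le _ _
    _ = 4 * Fintype.card k *
          ∑ a, ∑ c, RB.dot (A a c) (A a c) * ∑ b, RB.dot (B c b) (B c b) := by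
        simp only [mul_sum, sum_comm (s := (univ : Finset n)) (t := (univ : Finset k))]
        refine sum_congr rfl fun _ _ => sum_congr rfl fun _ _ => sum_congr rfl fun _ _ => by ring
    _ ≤ 4 * Fintype.card k * ∑ a, ∑ c, RB.dot (A a c) (A a c) * reInner B B := by
        gcongr with a _ c _
        · exact RB.dot_self_nonneg _
        · exact hrow c
    _ = 4 * Fintype.card k * (reInner A A * reInner B B) := by
        simp only [reInner, sum_mul]

theorem continuous_reInner :
    Continuous fun p : Matrix m n RB × Matrix m n RB => reInner p.1 p.2 := by
  unfold reInner RB.dot; fun_prop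

theorem Filter.Tendsto.reInner {α : Type*} {l : Filter α} {A B : α → Matrix m n RB}
    {A₀ B₀ : Matrix m n RB} (hA : Tendsto A l (𝓝 A₀)) (hB : Tendsto B l (𝓝 B₀)) :
    Tendsto (fun t => reInner (A t) (B t)) l (𝓝 (reInner A₀ B₀)) := by
  have h := (continuous_reInner.tendsto (A₀, B₀)).comp (hA.prodMk_nhds hB)
  dsimp only [Function.comp_def] at h
  exact h

/-- The obtuse-angle inequality, which characterizes the metric projection onto a closed convex
set `C`. -/
def HasProjIneq (P : Matrix m n RB → Matrix m n RB) (C : Matrix m n RB → Prop) : Prop :=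
  ∀ Q Z, C Z → reInner (Q - P Q) (Z - P Q) ≤ 0

theorem hasProjIneq_proj : HasProjIneq (m := m) (n := n) proj Pos := by
  intro Q Z hZ
  refine sum_nonpos fun a _ => sum_nonpos fun b _ => ?_
  obtain ⟨hr, hi, hj, hk⟩ := hZ a b
  simp only [RB.dot, Matrix.sub_apply, RB.sub_r, RB.sub_i, RB.sub_j, RB.sub_k, proj,
    Matrix.of_apply]
  linarith [sub_max_zero_mul_le (x := (Q a b).r) hr, sub_max_zero_mul_le (x := (Q a b).i) hi,
    sub_max_zero_mul_le (x := (Q a b).j) hj, sub_max_zero_mul_le (x := (Q a b).k) hk]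

theorem hasProjIneq_projJ : HasProjIneq (m := m) (n := n) projJ PosJ := by
  intro Q Z hZ
  refine sum_nonpos fun a _ => sum_nonpos fun b _ => ?_
  obtain ⟨hr, hi, hj, hk⟩ := hZ a b
  simp only [RB.dot, Matrix.sub_apply, RB.sub_r, RB.sub_i, RB.sub_j, RB.sub_k, projJ,
    Matrix.of_apply, hi, hk, sub_zero, mul_zero, add_zero]
  linarith [sub_max_zero_mul_le (x := (Q a b).r) hr, sub_max_zero_mul_le (x := (Q a b).j) hj]

namespace HasProjIneq

variable {P : Matrix m n RB → Matrix m n RB} {C : Matrix m n RB → Prop}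

theorem step_le (hP : HasProjIneq P C) (x G : Matrix m n RB) (η : ℝ) {z : Matrix m n RB}
    (hz : C z) :
    reInner (x - P (x - η • G)) (z - P (x - η • G)) ≤ η * reInner G (z - P (x - η • G)) := by
  have h := hP (x - η • G) z hz
  rw [sub_right_comm, reInner_sub_left, reInner_smul_left] at h
  linarith

theorem reInner_self_le (hP : HasProjIneq P C) {x : Matrix m n RB} (hx : C x)
    (G : Matrix m n RB) (η : ℝ) :
    reInner (P (x - η • G) - x) (P (x - η • G) - x) ≤ -η * reInner G (P (x - η • G) - x) := by
  have h := hP.step_le x G η hx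
  rw [← neg_sub (P _) x, reInner_neg_left, reInner_neg_right, reInner_neg_right] at h
  linarith

theorem armijo (hP : HasProjIneq P C) {φ : Matrix m n RB → ℝ} {x G : Matrix m n RB}
    {L σ η : ℝ} (hx : C x) (hL : 0 ≤ L)
    (hφ : ∀ D, φ (x + D) ≤ φ x + reInner G D + L * reInner D D) (hη : 0 < η)
    (hsmall : L * η ≤ 1 - σ) :
    φ (P (x - η • G)) - φ x ≤ σ * reInner G (P (x - η • G) - x) := by
  set D := P (x - η • G) - x
  have hDD : reInner D D ≤ -η * reInner G D := hP.reInner_self_le hx G η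
  have hGD : reInner G D ≤ 0 := by nlinarith [reInner_self_nonneg D]
  have hφD := hφ D
  rw [add_sub_cancel] at hφD
  -- `φ (x + D) - φ x ≤ (1 - L η) ⟨G, D⟩ ≤ σ ⟨G, D⟩`, as `⟨G, D⟩ ≤ 0`
  nlinarith [mul_le_mul_of_nonneg_left hDD hL]

theorem eventually_armijo (hP : HasProjIneq P C) {ι : Type*} {φ : ι → Matrix m n RB → ℝ}
    {x G : ι → Matrix m n RB} {L σ : ℝ} (hσ : σ < 1) (hL : 0 ≤ L) (hx : ∀ i, C (x i))
    (hφ : ∀ i D, φ i (x i + D) ≤ φ i (x i) + reInner (G i) D + L * reInner D D) :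
    ∀ᶠ η in 𝓝[>] (0 : ℝ), ∀ i, φ i (P (x i - η • G i)) - φ i (x i) ≤
      σ * reInner (G i) (P (x i - η • G i) - x i) := by
  have hsmall : ∀ᶠ η in 𝓝[>] (0 : ℝ), L * η ≤ 1 - σ := by
    refine nhdsWithin_le_nhds ((tendsto_id.const_mul L).eventually (ge_mem_nhds ?_))
    simpa using hσ
  filter_upwards [hsmall, self_mem_nhdsWithin] with η hη hpos i
  exact hP.armijo (hx i) hL (hφ i) hpos hη

theorem nonneg_reInner_of_tendsto (hP : HasProjIneq P C) {x G : ℕ → Matrix m n RB}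
    {x₀ G₀ : Matrix m n RB} {α : ℕ → ℝ} {a : ℝ} (hx : Tendsto x atTop (𝓝 x₀))
    (hG : Tendsto G atTop (𝓝 G₀)) (hstep : ∀ t, x (t + 1) = P (x t - α t • G t))
    (ha : 0 < a) (hα : ∀ t, a ≤ α t) {z : Matrix m n RB} (hz : C z) :
    0 ≤ reInner G₀ (z - x₀) := by
  have hx' : Tendsto (fun t => x (t + 1)) atTop (𝓝 x₀) := hx.comp (tendsto_add_atTop_nat 1)
  have hz' : Tendsto (fun t => z - x (t + 1)) atTop (𝓝 (z - x₀)) := tendsto_const_nhds.sub hx'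
  have hc : Tendsto (fun t => reInner (x t - x (t + 1)) (z - x (t + 1))) atTop (𝓝 0) := by
    have h := (hx.sub hx').reInner hz'
    rwa [sub_self, reInner_zero_left] at h
  refine nonneg_of_tendsto_of_le_mul hc (hG.reInner hz') ha hα fun t => ?_
  rw [hstep t]
  exact hP.step_le (x t) (G t) (α t) hz

end HasProjIneq

end RBMatrix

section Objective

variable {M N l : ℕ} (X : Matrix (Fin M) (Fin N) RB)

theorem objf_eq (W : Matrix (Fin M) (Fin l) RB) (H : Matrix (Fin l) (Fin N) RB) :
    objf X W H = 1 / 2 * reInner (W * H - X) (W * H - X) := by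
  rw [objf, fnorm, Real.sq_sqrt (by rw [minner_r]; exact reInner_self_nonneg _), minner_r,
    ← neg_sub, reInner_neg_left, reInner_neg_right, neg_neg]

theorem objf_add_left (W D : Matrix (Fin M) (Fin l) RB) (H : Matrix (Fin l) (Fin N) RB) :
    objf X (W + D) H =
      objf X W H + reInner (gradW X W H) D + 1 / 2 * reInner (D * H) (D * H) := by
  rw [objf_eq, objf_eq, Matrix.add_mul, add_sub_right_comm, reInner_add_add_self,
    reInner_mul_right, gradW]
  ring

theorem objf_add_right (W : Matrix (Fin M) (Fin l) RB) (H D : Matrix (Fin l) (Fin N) RB) :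
    objf X W (H + D) =
      objf X W H + reInner (gradH X W H) D + 1 / 2 * reInner (W * D) (W * D) := by
  rw [objf_eq, objf_eq, Matrix.mul_add, add_sub_right_comm, reInner_add_add_self,
    reInner_mul_left, gradH]
  ring

theorem objf_add_left_le {W D : Matrix (Fin M) (Fin l) RB} {H : Matrix (Fin l) (Fin N) RB}
    {K : ℝ} (hK : reInner H H ≤ K) :
    objf X (W + D) H ≤ objf X W H + reInner (gradW X W H) D + 2 * l * K * reInner D D := by
  have h := reInner_mul_self_le D H
  rw [Fintype.card_fin] at h
  rw [objf_add_left]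
  nlinarith [mul_le_mul_of_nonneg_left hK (reInner_self_nonneg D)]

theorem objf_add_right_le {W : Matrix (Fin M) (Fin l) RB} {H D : Matrix (Fin l) (Fin N) RB}
    {K : ℝ} (hK : reInner W W ≤ K) :
    objf X W (H + D) ≤ objf X W H + reInner (gradH X W H) D + 2 * l * K * reInner D D := by
  have h := reInner_mul_self_le W D
  rw [Fintype.card_fin] at h
  rw [objf_add_right]
  nlinarith [mul_le_mul_of_nonneg_right hK (reInner_self_nonneg D)]

theorem eventually_armijoW {ι : Type*} {σ : ℝ} (hσ : σ < 1)
    {W : ι → Matrix (Fin M) (Fin l) RB} {H : ι → Matrix (Fin l) (Fin N) RB} (hW : ∀ i, Pos (W i))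
    (hH : BddAbove (Set.range fun i => reInner (H i) (H i))) :
    ∀ᶠ η in 𝓝[>] (0 : ℝ), ∀ i, armijoW X (W i) (H i) σ η := by
  obtain ⟨K, hK⟩ := hH
  simpa only [armijoW, minner_r] using hasProjIneq_proj.eventually_armijo
    (φ := fun i W => objf X W (H i)) (G := fun i => gradW X (W i) (H i)) hσ
    (by positivity : 0 ≤ 2 * l * max K 0) hW
    fun i _ => objf_add_left_le X ((hK ⟨i, rfl⟩).trans (le_max_left K 0))

theorem eventually_armijoH {ι : Type*} {σ : ℝ} (hσ : σ < 1)
    {W : ι → Matrix (Fin M) (Fin l) RB} {H : ι → Matrix (Fin l) (Fin N) RB} (hH : ∀ i, PosJ (H i))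
    (hW : BddAbove (Set.range fun i => reInner (W i) (W i))) :
    ∀ᶠ η in 𝓝[>] (0 : ℝ), ∀ i, armijoH X (W i) (H i) σ η := by
  obtain ⟨K, hK⟩ := hW
  simpa only [armijoH, minner_r] using hasProjIneq_projJ.eventually_armijo
    (φ := fun i H => objf X (W i) H) (G := fun i => gradH X (W i) (H i)) hσ
    (by positivity : 0 ≤ 2 * l * max K 0) hH
    fun i _ => objf_add_right_le X ((hK ⟨i, rfl⟩).trans (le_max_left K 0))

theorem continuous_gradW :
    Continuous fun p : Matrix (Fin M) (Fin l) RB × Matrix (Fin l) (Fin N) RB =>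
      gradW X p.1 p.2 := by
  unfold gradW; fun_prop

theorem continuous_gradH :
    Continuous fun p : Matrix (Fin M) (Fin l) RB × Matrix (Fin l) (Fin N) RB =>
      gradH X p.1 p.2 := by
  unfold gradH; fun_prop

end Objective

theorem rb_pg_convergence_general {M N l : ℕ} (X : Matrix (Fin M) (Fin N) RB)
    (σ μ : ℝ) (hσ : σ ∈ Set.Ioo (0 : ℝ) 1) (hμ : μ ∈ Set.Ioo (0 : ℝ) 1)
    (W : ℕ → Matrix (Fin M) (Fin l) RB) (H : ℕ → Matrix (Fin l) (Fin N) RB)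
    (d s : ℕ → ℕ)
    (hWpos : ∀ t, Pos (W t)) (hHpos : ∀ t, PosJ (H t))
    (hWstep : ∀ t, W (t + 1) = proj (W t - μ ^ d t • gradW X (W t) (H t)))
    (hWmin : ∀ t, ∀ d' < d t, ¬ armijoW X (W t) (H t) σ (μ ^ d'))
    (hHstep : ∀ t, H (t + 1) = projJ (H t - μ ^ s t • gradH X (W (t + 1)) (H t)))
    (hHmin : ∀ t, ∀ s' < s t, ¬ armijoH X (W (t + 1)) (H t) σ (μ ^ s'))
    (Ws : Matrix (Fin M) (Fin l) RB) (Hs : Matrix (Fin l) (Fin N) RB)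
    (hWlim : ∀ a b,
      Filter.Tendsto (fun t => (W t a b).r) Filter.atTop (nhds ((Ws a b).r)) ∧
      Filter.Tendsto (fun t => (W t a b).i) Filter.atTop (nhds ((Ws a b).i)) ∧
      Filter.Tendsto (fun t => (W t a b).j) Filter.atTop (nhds ((Ws a b).j)) ∧
      Filter.Tendsto (fun t => (W t a b).k) Filter.atTop (nhds ((Ws a b).k)))
    (hHlim : ∀ a b,
      Filter.Tendsto (fun t => (H t a b).r) Filter.atTop (nhds ((Hs a b).r)) ∧
      Filter.Tendsto (fun t => (H t a b).i) Filter.atTop (nhds ((Hs a b).i)) ∧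
      Filter.Tendsto (fun t => (H t a b).j) Filter.atTop (nhds ((Hs a b).j)) ∧
      Filter.Tendsto (fun t => (H t a b).k) Filter.atTop (nhds ((Hs a b).k))) :
    (∀ Mm : Matrix (Fin M) (Fin l) RB, Pos Mm →
      0 ≤ (minner (gradW X Ws Hs) (Mm - Ws)).r) ∧
    (∀ Nn : Matrix (Fin l) (Fin N) RB, PosJ Nn →
      0 ≤ (minner (gradH X Ws Hs) (Nn - Hs)).r) := by
  have hW := Matrix.tendsto_of_forall_components hWlim
  have hH := Matrix.tendsto_of_forall_components hHlim
  have hW' : Tendsto (fun t => W (t + 1)) atTop (𝓝 Ws) := hW.comp (tendsto_add_atTop_nat 1)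
  obtain ⟨α, hα, hαd⟩ := exists_pos_le_pow_of_forall_lt_not hμ.1
    (eventually_armijoW X hσ.2 hWpos (hH.reInner hH).bddAbove_range) hWmin
  obtain ⟨β, hβ, hβs⟩ := exists_pos_le_pow_of_forall_lt_not hμ.1
    (eventually_armijoH X hσ.2 hHpos (hW'.reInner hW').bddAbove_range) hHmin
  refine ⟨fun Z hZ => ?_, fun Z hZ => ?_⟩
  · rw [minner_r]
    exact hasProjIneq_proj.nonneg_reInner_of_tendsto hW
      (((continuous_gradW X).tendsto (Ws, Hs)).comp (hW.prodMk_nhds hH)) hWstep hα hαd hZ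
  · rw [minner_r]
    exact hasProjIneq_projJ.nonneg_reInner_of_tendsto hH
      (((continuous_gradH X).tendsto (Ws, Hs)).comp (hW'.prodMk_nhds hH)) hHstep hβ hβs hZ

/-- convergence of the RB projected gradient method with Armijo step sizes
`α_t = μ^{d_t}`, `β_t = μ^{s_t}` (with `d_t`, `s_t` the smallest exponents satisfying the
Armijo condition): any componentwise limit `(W*, H*)` of the iterates is a stationary
point, i.e. it satisfies the variational inequalities. -/
theorem rb_pg_convergence {M N l : ℕ} (X : Matrix (Fin M) (Fin N) RB)
    (σ μ : ℝ) (hσ : σ ∈ Set.Ioo (0 : ℝ) 1) (hμ : μ ∈ Set.Ioo (0 : ℝ) 1)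
    (W : ℕ → Matrix (Fin M) (Fin l) RB) (H : ℕ → Matrix (Fin l) (Fin N) RB)
    (d s : ℕ → ℕ)
    (hWpos : ∀ t, Pos (W t)) (hHpos : ∀ t, PosJ (H t))
    (hWstep : ∀ t, W (t + 1) = proj (W t - μ ^ d t • gradW X (W t) (H t)))
    (hWarm : ∀ t, armijoW X (W t) (H t) σ (μ ^ d t))
    (hWmin : ∀ t, ∀ d' < d t, ¬ armijoW X (W t) (H t) σ (μ ^ d'))
    (hHstep : ∀ t, H (t + 1) = projJ (H t - μ ^ s t • gradH X (W (t + 1)) (H t)))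
    (hHarm : ∀ t, armijoH X (W (t + 1)) (H t) σ (μ ^ s t))
    (hHmin : ∀ t, ∀ s' < s t, ¬ armijoH X (W (t + 1)) (H t) σ (μ ^ s'))
    (Ws : Matrix (Fin M) (Fin l) RB) (Hs : Matrix (Fin l) (Fin N) RB)
    (hWlim : ∀ a b,
      Filter.Tendsto (fun t => (W t a b).r) Filter.atTop (nhds ((Ws a b).r)) ∧
      Filter.Tendsto (fun t => (W t a b).i) Filter.atTop (nhds ((Ws a b).i)) ∧
      Filter.Tendsto (fun t => (W t a b).j) Filter.atTop (nhds ((Ws a b).j)) ∧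
      Filter.Tendsto (fun t => (W t a b).k) Filter.atTop (nhds ((Ws a b).k)))
    (hHlim : ∀ a b,
      Filter.Tendsto (fun t => (H t a b).r) Filter.atTop (nhds ((Hs a b).r)) ∧
      Filter.Tendsto (fun t => (H t a b).i) Filter.atTop (nhds ((Hs a b).i)) ∧
      Filter.Tendsto (fun t => (H t a b).j) Filter.atTop (nhds ((Hs a b).j)) ∧
      Filter.Tendsto (fun t => (H t a b).k) Filter.atTop (nhds ((Hs a b).k))) :
    (∀ Mm : Matrix (Fin M) (Fin l) RB, Pos Mm →
      0 ≤ (minner (gradW X Ws Hs) (Mm - Ws)).r) ∧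
    (∀ Nn : Matrix (Fin l) (Fin N) RB, PosJ Nn →
      0 ≤ (minner (gradH X Ws Hs) (Nn - Hs)).r) :=
  rb_pg_convergence_general X σ μ hσ hμ W H d s hWpos hHpos hWstep hWmin hHstep hHmin Ws Hs hWlim
    hHlim
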